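/- Let H be an infinite-dimensional separable Hilbert space and let 𝒞 be the family of all nonzero finite-dimensional subspaces of H, identified with the set of projectors {Q_V = I − P_V : V ∈ 𝒞} ⊆ B(H). Then 𝒞 satisfies MSAP, yet the convex hull of 𝒞⁺ = 𝒞 + P⁺(H) does not equal the convex hull of the WOT-closure of 𝒞⁺; indeed the zero operator belongs to the WOT-closure of 𝒞 but not to co(𝒞⁺). -/

import Mathlib

set_option synthInstance.maxHeartbeats 1000000

open Metric ContinuousLinearMap

noncomputable section

variable {H : Type*} [NormedAddCommGroup H] [InnerProductSpace ℂ H] [CompleteSpace H]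

/-- The projector `Q_V = I - P_V` associated to a closed subspace `V`, realized as the
orthogonal projection onto `Vᗮ` (for closed `V` these coincide). -/
noncomputable def projQ (V : Submodule ℂ H) : H →L[ℂ] H :=
  Vᗮ.subtypeL ∘L Vᗮ.orthogonalProjectionOnto

/-- The Minkowski sum `S⁺ = S + P⁺(H)` of a set of operators with the positive operators. -/
def plusPos (S : Set (H →L[ℂ] H)) : Set (H →L[ℂ] H) :=
  {T | ∃ Q ∈ S, ∃ N : H →L[ℂ] H, N.IsPositive ∧ T = Q + N}

/-- A family of (closed) subspaces has the Minimum Subspace Approximation Property. -/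
def MSAP (C : Set (Submodule ℂ H)) : Prop :=
  ∀ F : Finset H, ∃ V ∈ C, (∑ f ∈ F, infDist f (V : Set H) ^ 2) =
    ⨅ W : C, ∑ f ∈ F, infDist f ((W : Submodule ℂ H) : Set H) ^ 2

open Filter Topology

/-- If `x ∈ Vᗮ`, then `projQ V x = x`. -/
lemma projQ_apply_of_mem_orthogonal {V : Submodule ℂ H} {x : H} (hx : x ∈ Vᗮ) :
    projQ V x = x := by
  simp only [projQ, ContinuousLinearMap.comp_apply, Submodule.subtypeL_apply]
  exact Submodule.starProjection_eq_self_iff.mpr hx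

/-- For finite-dimensional `V` (more generally, with orthogonal projection), the norm of
`projQ V x` is at most the distance from `x` to any point of `V`. -/
lemma norm_projQ_apply_le {V : Submodule ℂ H} [V.HasOrthogonalProjection] (x : H) {v : H}
    (hv : v ∈ V) : ‖projQ V x‖ ≤ ‖x - v‖ := by
  have h1 : projQ V x = x - V.starProjection x := by
    simp only [projQ, ContinuousLinearMap.comp_apply, Submodule.subtypeL_apply]
    exact Submodule.starProjection_orthogonal_val x
  rw [h1, Submodule.starProjection_minimal]
  exact ciInf_le ⟨0, fun r ⟨w, hw⟩ => hw ▸ norm_nonneg _⟩ (⟨v, hv⟩ : V)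

/-- Zero is not in the real convex hull of `C⁺` for the family of nonzero
finite-dimensional subspaces. -/
lemma zero_not_mem_hull (hinf : ¬ FiniteDimensional ℂ H) :
    (0 : H →WOT[ℂ] H) ∉ convexHull ℝ ((ContinuousLinearMapWOT.ofCLM : (H →L[ℂ] H) → (H →WOT[ℂ] H)) ''
        plusPos (projQ '' {V : Submodule ℂ H | FiniteDimensional ℂ V ∧ V ≠ ⊥})) := by
  intro h0
  classical
  set S : Set (H →L[ℂ] H) :=
    plusPos (projQ '' {V : Submodule ℂ H | FiniteDimensional ℂ V ∧ V ≠ ⊥}) with hS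
  -- pull back through the (ℝ-linear) equivalence `toWOT`
  set e : (H →L[ℂ] H) ≃ₗ[ℝ] (H →WOT[ℂ] H) :=
    (ContinuousLinearMapWOT.linearEquiv ℝ).symm with he
  have himg : (⇑e.symm) '' ((ContinuousLinearMapWOT.ofCLM : (H →L[ℂ] H) → (H →WOT[ℂ] H)) '' S) = S := by
    rw [Set.image_image]
    have : ∀ a : H →L[ℂ] H, e.symm ((ContinuousLinearMapWOT.ofCLM : (H →L[ℂ] H) → (H →WOT[ℂ] H)) a) = a := by
      intro a
      exact rfl
    simp only [this, Set.image_id']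
  have h1 : (0 : H →L[ℂ] H) ∈ convexHull ℝ S := by
    have h1' := e.symm.toLinearMap.image_convexHull ((ContinuousLinearMapWOT.ofCLM : (H →L[ℂ] H) → (H →WOT[ℂ] H)) '' S)
    simp only [LinearEquiv.coe_coe] at h1'
    have : e.symm (0 : H →WOT[ℂ] H) ∈
        (⇑e.symm) '' (convexHull ℝ ((ContinuousLinearMapWOT.ofCLM : (H →L[ℂ] H) → (H →WOT[ℂ] H)) '' S)) :=
      Set.mem_image_of_mem _ h0
    rw [h1', himg, map_zero] at this
    exact this
  rw [convexHull_eq] at h1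
  obtain ⟨ι, t, w, z, hw0, hw1, hz, hcm⟩ := h1
  -- extract subspaces and positive parts
  have hz' : ∀ i : ι, ∃ (V : Submodule ℂ H) (N : H →L[ℂ] H),
      i ∈ t → (FiniteDimensional ℂ V ∧ N.IsPositive ∧ z i = projQ V + N) := by
    intro i
    by_cases hi : i ∈ t
    · obtain ⟨Q, ⟨V, hV, rfl⟩, N, hN, hzi⟩ := hz i hi
      exact ⟨V, N, fun _ => ⟨hV.1, hN, hzi⟩⟩
    · exact ⟨⊥, 0, fun h => absurd h hi⟩
  choose V N hVN using hz'
  -- the sup of all the subspaces is finite-dimensional, hence proper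
  set W : Submodule ℂ H := t.sup fun i => if i ∈ t then V i else ⊥ with hWdef
  haveI hWfd : FiniteDimensional ℂ W := by
    refine Finset.sup_induction (p := fun U : Submodule ℂ H => FiniteDimensional ℂ U) ?_ ?_ ?_
    · exact inferInstance
    · intro a ha b hb
      haveI := ha; haveI := hb; exact inferInstance
    · intro i hi
      rw [if_pos hi]
      exact (hVN i hi).1
  have hWne : W ≠ ⊤ := by
    intro hW
    haveI : FiniteDimensional ℂ (⊤ : Submodule ℂ H) := hW ▸ hWfd
    exact hinf (Submodule.topEquiv (R := ℂ) (M := H)).finiteDimensional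
  haveI : CompleteSpace W := FiniteDimensional.complete ℂ W
  have hbot : Wᗮ ≠ ⊥ := fun h => hWne (Submodule.orthogonal_eq_bot_iff.mp h)
  obtain ⟨x, hxW, hx0⟩ := Submodule.exists_mem_ne_zero_of_ne_bot hbot
  -- the key positivity estimate
  have hVle : ∀ i ∈ t, V i ≤ W := by
    intro i hi
    have := Finset.le_sup (f := fun i => if i ∈ t then V i else ⊥) hi
    simpa [if_pos hi] using this
  have key : ∀ i ∈ t, ‖x‖ ^ 2 ≤ Complex.re (inner ℂ x (z i x) : ℂ) := by
    intro i hi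
    obtain ⟨_, hNpos, hzi⟩ := hVN i hi
    have hxVi : x ∈ (V i)ᗮ := Submodule.orthogonal_le (hVle i hi) hxW
    rw [hzi]
    have : (projQ (V i) + N i) x = x + N i x := by
      rw [ContinuousLinearMap.add_apply, projQ_apply_of_mem_orthogonal hxVi]
    rw [this, inner_add_right, Complex.add_re]
    have h2 : Complex.re (inner ℂ x x : ℂ) = ‖x‖ ^ 2 := by
      exact_mod_cast inner_self_eq_norm_sq (𝕜 := ℂ) x
    have h3 : 0 ≤ Complex.re (inner ℂ x (N i x) : ℂ) := (Complex.nonneg_iff.mp (hNpos.inner_nonneg_right x)).1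
    linarith
  -- evaluate the convex combination at `x`
  have hsum0 : ∑ i ∈ t, w i • z i = 0 := by
    rw [← Finset.centerMass_eq_of_sum_1 _ _ hw1]; exact hcm
  have happ : (∑ i ∈ t, w i • z i) x = 0 := by rw [hsum0]; rfl
  have hsum : ∑ i ∈ t, w i * Complex.re (inner ℂ x (z i x) : ℂ) = 0 := by
    have h4 : (∑ i ∈ t, w i • z i) x = ∑ i ∈ t, w i • (z i x) := by
      rw [ContinuousLinearMap.sum_apply]
      exact Finset.sum_congr rfl fun i _ => rfl
    have h5 : (inner ℂ x ((∑ i ∈ t, w i • z i) x) : ℂ) =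
        ∑ i ∈ t, (w i : ℂ) * inner ℂ x (z i x) := by
      rw [h4, inner_sum]
      refine Finset.sum_congr rfl fun i _ => ?_
      rw [← Complex.coe_smul, inner_smul_right]
    have h6 : (inner ℂ x ((∑ i ∈ t, w i • z i) x) : ℂ) = 0 := by
      rw [happ, inner_zero_right]
    rw [h5] at h6
    have := congrArg Complex.re h6
    rw [Complex.re_sum] at this
    simpa using this
  have hge : ‖x‖ ^ 2 ≤ 0 := by
    calc ‖x‖ ^ 2 = ∑ i ∈ t, w i * ‖x‖ ^ 2 := by rw [← Finset.sum_mul, hw1, one_mul]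
    _ ≤ ∑ i ∈ t, w i * Complex.re (inner ℂ x (z i x) : ℂ) :=
        Finset.sum_le_sum fun i hi => mul_le_mul_of_nonneg_left (key i hi) (hw0 i hi)
    _ = 0 := hsum
  have : (0 : ℝ) < ‖x‖ ^ 2 := pow_pos (norm_pos_iff.mpr hx0) 2
  linarith

/-- In an infinite-dimensional separable Hilbert space, the family `C` of all
nonzero finite-dimensional subspaces satisfies MSAP, but the convex hull of `C⁺ = C + P⁺(H)`
does not equal the convex hull of the WOT-closure of `C⁺`: indeed `0` lies in the WOT-closure of
the projector set of `C` but not in the convex hull of `C⁺`. -/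
theorem finiteDimensional_family_msap_but_convexHulls_differ
    [TopologicalSpace.SeparableSpace H] (hinf : ¬ FiniteDimensional ℂ H) :
    MSAP {V : Submodule ℂ H | FiniteDimensional ℂ V ∧ V ≠ ⊥} ∧
    convexHull ℝ ((ContinuousLinearMapWOT.ofCLM : (H →L[ℂ] H) → (H →WOT[ℂ] H)) ''
        plusPos (projQ '' {V : Submodule ℂ H | FiniteDimensional ℂ V ∧ V ≠ ⊥})) ≠
      convexHull ℝ (closure ((ContinuousLinearMapWOT.ofCLM : (H →L[ℂ] H) → (H →WOT[ℂ] H)) ''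
        plusPos (projQ '' {V : Submodule ℂ H | FiniteDimensional ℂ V ∧ V ≠ ⊥}))) ∧
    (0 : H →WOT[ℂ] H) ∈ closure ((ContinuousLinearMapWOT.ofCLM : (H →L[ℂ] H) → (H →WOT[ℂ] H)) ''
        (projQ '' {V : Submodule ℂ H | FiniteDimensional ℂ V ∧ V ≠ ⊥})) ∧
    (0 : H →WOT[ℂ] H) ∉ convexHull ℝ ((ContinuousLinearMapWOT.ofCLM : (H →L[ℂ] H) → (H →WOT[ℂ] H)) ''
        plusPos (projQ '' {V : Submodule ℂ H | FiniteDimensional ℂ V ∧ V ≠ ⊥})) := by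
  haveI : Nontrivial H := by
    by_contra h
    rw [not_nontrivial_iff_subsingleton] at h
    exact hinf inferInstance
  obtain ⟨e₀, he₀⟩ := exists_ne (0 : H)
  set C : Set (Submodule ℂ H) := {V : Submodule ℂ H | FiniteDimensional ℂ V ∧ V ≠ ⊥} with hC
  -- part 1: MSAP
  have h_msap : MSAP C := by
    intro F
    set V : Submodule ℂ H := Submodule.span ℂ (insert e₀ (F : Set H)) with hV
    haveI : FiniteDimensional ℂ V :=
      FiniteDimensional.span_of_finite ℂ ((F.finite_toSet).insert e₀)
    have hVC : V ∈ C := by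
      refine ⟨inferInstance, fun h => he₀ ?_⟩
      have : e₀ ∈ V := Submodule.subset_span (Set.mem_insert _ _)
      rw [h] at this
      simpa using this
    have hzero : (∑ f ∈ F, infDist f (V : Set H) ^ 2) = 0 := by
      refine Finset.sum_eq_zero fun f hf => ?_
      have : f ∈ V := Submodule.subset_span (Set.mem_insert_of_mem _ hf)
      rw [infDist_zero_of_mem this]
      simp
    refine ⟨V, hVC, ?_⟩
    rw [hzero]
    haveI : Nonempty C := ⟨⟨V, hVC⟩⟩
    refine le_antisymm ?_ ?_
    · exact le_ciInf fun W => Finset.sum_nonneg fun f _ => pow_nonneg infDist_nonneg _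
    · have := ciInf_le (f := fun W : C => ∑ f ∈ F, infDist f ((W : Submodule ℂ H) : Set H) ^ 2)
        ⟨0, fun r ⟨W, hW⟩ => hW ▸ Finset.sum_nonneg fun f _ => pow_nonneg infDist_nonneg _⟩
        (⟨V, hVC⟩ : C)
      simpa [hzero] using this
  -- part 3: 0 in the WOT closure of the projector set
  have h_closure : (0 : H →WOT[ℂ] H) ∈ closure ((ContinuousLinearMapWOT.ofCLM : (H →L[ℂ] H) → (H →WOT[ℂ] H)) ''
      (projQ '' C)) := by
    obtain ⟨u, hu⟩ := TopologicalSpace.exists_dense_seq H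
    set Vn : ℕ → Submodule ℂ H := fun n => Submodule.span ℂ (insert e₀ (u '' Set.Iic n))
      with hVn
    haveI : ∀ n, FiniteDimensional ℂ (Vn n) := fun n =>
      FiniteDimensional.span_of_finite ℂ (((Set.finite_Iic n).image u).insert e₀)
    have hVnC : ∀ n, Vn n ∈ C := by
      intro n
      refine ⟨inferInstance, fun h => he₀ ?_⟩
      have : e₀ ∈ Vn n := Submodule.subset_span (Set.mem_insert _ _)
      rw [h] at this
      simpa using this
    -- strong convergence `projQ (Vn n) x → 0`
    have hstrong : ∀ x : H, Tendsto (fun n => projQ (Vn n) x) atTop (𝓝 0) := by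
      intro x
      rw [NormedAddCommGroup.tendsto_nhds_zero]
      intro ε hε
      obtain ⟨m, hm⟩ : ∃ m, dist x (u m) < ε := hu.exists_dist_lt x hε
      filter_upwards [eventually_ge_atTop m] with n hn
      have hum : u m ∈ Vn n :=
        Submodule.subset_span (Set.mem_insert_of_mem _ ⟨m, hn, rfl⟩)
      calc ‖projQ (Vn n) x‖ ≤ ‖x - u m‖ := norm_projQ_apply_le x hum
      _ = dist x (u m) := (dist_eq_norm _ _).symm
      _ < ε := hm
    -- hence WOT convergence
    have hwot : Tendsto (fun n => (ContinuousLinearMapWOT.ofCLM : (H →L[ℂ] H) → (H →WOT[ℂ] H)) (projQ (Vn n)))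
        atTop (𝓝 (0 : H →WOT[ℂ] H)) := by
      rw [ContinuousLinearMapWOT.tendsto_iff_forall_dual_apply_tendsto]
      intro xv y
      have : Tendsto (fun n => y (projQ (Vn n) xv)) atTop (𝓝 (y 0)) :=
        (y.continuous.tendsto 0).comp (hstrong xv)
      simpa [ContinuousLinearMap.toWOT_apply] using this
    exact mem_closure_of_tendsto hwot (Eventually.of_forall fun n =>
      Set.mem_image_of_mem _ (Set.mem_image_of_mem _ (hVnC n)))
  -- part 4: 0 not in the convex hull of `C⁺`
  have h_nothull := zero_not_mem_hull hinf
  -- part 2: the convex hulls differ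
  have h_ne : convexHull ℝ ((ContinuousLinearMapWOT.ofCLM : (H →L[ℂ] H) → (H →WOT[ℂ] H)) '' plusPos (projQ '' C)) ≠
      convexHull ℝ (closure ((ContinuousLinearMapWOT.ofCLM : (H →L[ℂ] H) → (H →WOT[ℂ] H)) '' plusPos (projQ '' C))) := by
    intro heq
    apply h_nothull
    rw [heq]
    refine subset_convexHull ℝ _ ?_
    refine closure_mono ?_ h_closure
    rintro T ⟨Q, ⟨Vq, hVq, rfl⟩, rfl⟩
    exact ⟨projQ Vq + 0, ⟨projQ Vq, ⟨Vq, hVq, rfl⟩, 0, isPositive_zero, rfl⟩, by simp⟩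
  exact ⟨h_msap, h_ne, h_closure, h_nothull⟩

end
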